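/- Let p be an odd prime, m ≥ 1 with p^m ≡ 3 (mod 4), and let α be a nonzero non-square element of F_{p^m}. Then -4α has exactly two fourth roots in F_{p^m}; i.e., there exists γ ∈ F_{p^m} with γ^4 = -4α, and the set of solutions of x^4 + 4α = 0 in F_{p^m} is {γ, -γ}. -/
import Mathlib

lemma mul_nonsquare_aux {F : Type} [Field F] [Fintype F] {a b : F}
    (ha : a ≠ 0) (hb : b ≠ 0) (hsa : ¬ IsSquare a) (hsb : ¬ IsSquare b) :
    IsSquare (a * b) := by
  classical
  have h1 := (quadraticChar_neg_one_iff_not_isSquare (F := F)).mpr hsa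
  have h2 := (quadraticChar_neg_one_iff_not_isSquare (F := F)).mpr hsb
  have h : quadraticChar F (a * b) = 1 := by rw [map_mul, h1, h2]; ring
  exact (quadraticChar_one_iff_isSquare (mul_ne_zero ha hb)).mp h

theorem stmt1 (p m : ℕ) (hp : p.Prime) (hodd : Odd p) (hm : 0 < m)
    (K : Type) [Field K] [Fintype K] (hK : Fintype.card K = p ^ m)
    (h3 : p ^ m % 4 = 3) (α : K) (hα : α ≠ 0) (hns : ¬ IsSquare α) :
    ∃ γ : K, γ ^ 4 = -4 * α ∧ γ ≠ -γ ∧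
      ∀ x : K, x ^ 4 + 4 * α = 0 ↔ x = γ ∨ x = -γ := by
  have hcard3 : Fintype.card K % 4 = 3 := by rw [hK]; exact h3
  have hne2 : ringChar K ≠ 2 := by
    intro h
    have := FiniteField.even_card_of_char_two h
    omega
  have h2 : (2 : K) ≠ 0 := Ring.two_ne_zero hne2
  have h4 : (4 : K) ≠ 0 := by
    have : (4 : K) = 2 * 2 := by norm_num
    rw [this]; exact mul_ne_zero h2 h2
  have hn1 : ¬ IsSquare (-1 : K) := fun h =>
    (FiniteField.isSquare_neg_one_iff.mp h) hcard3
  have hn1z : (-1 : K) ≠ 0 := by norm_num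
  -- -α is a square
  obtain ⟨β, hβ⟩ : IsSquare (-α) := by
    have := mul_nonsquare_aux hn1z hα hn1 hns
    rwa [neg_one_mul] at this
  have hβ0 : β ≠ 0 := by
    intro h; rw [h, mul_zero] at hβ
    exact hα (neg_eq_zero.mp hβ)
  set s : K := 2 * β with hs_def
  have hs0 : s ≠ 0 := mul_ne_zero h2 hβ0
  have hs2 : s ^ 2 = -4 * α := by
    rw [hs_def]
    linear_combination (-4 : K) * hβ
  -- one of s, -s is a square
  have hor : IsSquare s ∨ IsSquare (-s) := by
    by_cases h : IsSquare s
    · exact Or.inl h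
    · right
      have := mul_nonsquare_aux hn1z hs0 hn1 h
      rwa [neg_one_mul] at this
  obtain ⟨γ, hγ4⟩ : ∃ γ : K, γ ^ 4 = -4 * α := by
    rcases hor with ⟨t, ht⟩ | ⟨t, ht⟩
    · exact ⟨t, by rw [show t ^ 4 = (t * t) ^ 2 by ring, ← ht, hs2]⟩
    · refine ⟨t, ?_⟩
      have : t * t = -s := ht.symm
      rw [show t ^ 4 = (t * t) ^ 2 by ring, this, neg_pow, hs2]
      norm_num
  have hc0 : (-4 : K) * α ≠ 0 := mul_ne_zero (by norm_num; exact h4) hα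
  have hγ0 : γ ≠ 0 := by
    intro h; rw [h] at hγ4; exact hc0 (by simpa using hγ4.symm)
  refine ⟨γ, hγ4, ?_, ?_⟩
  · intro h
    have : 2 * γ = 0 := by linear_combination h
    exact (mul_ne_zero h2 hγ0) this
  · intro x
    constructor
    · intro hx
      have hfac : (x - γ) * (x + γ) * (x ^ 2 + γ ^ 2) = 0 := by
        linear_combination hx - hγ4
      rcases mul_eq_zero.mp hfac with h | h
      · rcases mul_eq_zero.mp h with h | h
        · exact Or.inl (by linear_combination h)
        · exact Or.inr (by linear_combination h)
      · exfalso
        apply hn1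
        refine ⟨x * γ⁻¹, ?_⟩
        have hx2 : x ^ 2 = -γ ^ 2 := by linear_combination h
        field_simp
        linear_combination -hx2
    · rintro (rfl | rfl)
      · linear_combination hγ4
      · linear_combination hγ4
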